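/- arXiv:1604.05084 — 4 statements merged into one kernel-verified Lean document; each statement's English description precedes it below -/
import Mathlib

section
/- Let 1 ≤ m ≤ n and 1 ≤ k ≤ C(n,m), and let I be the initial segment of length k in the colex order on m-element subsets of [n]. Then the boundary of I in the Johnson graph J(n,m) has cardinality |∂I| = f(k,n,m). -/
open Finset

/-- The set of vertices of the Johnson graph `J(n,m)`: the `m`-element subsets of
`[n] = {0, …, n-1}`. -/
def johnsonVerts (n m : ℕ) : Finset (Finset ℕ) :=
  (Finset.range n).powersetCard m

/-- The (vertex) boundary of a set `S` of vertices in the Johnson graph `J(n,m)`: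
the vertices outside `S` whose symmetric difference with some member of `S` has
cardinality `2`. -/
def boundary (n m : ℕ) (S : Finset (Finset ℕ)) : Finset (Finset ℕ) :=
  (johnsonVerts n m).filter fun y => y ∉ S ∧ ∃ x ∈ S, (symmDiff x y).card = 2

/-- The ball of a set `S` of vertices in the Johnson graph `J(n,m)`. -/
def ball (n m : ℕ) (S : Finset (Finset ℕ)) : Finset (Finset ℕ) :=
  S ∪ boundary n m S

/-- The initial segment of length `k` in the colex order on `m`-element subsets of
`[n]`: the `m`-subsets `s` such that fewer than `k` of the `m`-subsets are
colex-smaller than `s`. -/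
def colexInitSeg (n m k : ℕ) : Finset (Finset ℕ) :=
  (johnsonVerts n m).filter fun s =>
    ((johnsonVerts n m).filter fun t =>
      toColex t < toColex s).card < k

/-- The isoperimetric function `μ_{n,m}(k)` of the Johnson graph `J(n,m)`:
the smallest boundary cardinality among sets of `k` vertices. -/
noncomputable def mu (n m k : ℕ) : ℕ :=
  sInf {b | ∃ S : Finset (Finset ℕ),
    S ⊆ johnsonVerts n m ∧ S.card = k ∧ (boundary n m S).card = b}

/-- The lower shadow of a family `S` of `m`-element subsets of `[n]`:
the `(m-1)`-subsets contained in some member of `S`. -/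
def lowShadow (n m : ℕ) (S : Finset (Finset ℕ)) : Finset (Finset ℕ) :=
  ((Finset.range n).powersetCard (m - 1)).filter fun t => ∃ s ∈ S, t ⊆ s

/-- The upper shadow of a family `S` of `c`-element subsets of `[n]`:
the `(c+1)`-subsets of `[n]` containing some member of `S`. -/
def upShadow' (n c : ℕ) (S : Finset (Finset ℕ)) : Finset (Finset ℕ) :=
  ((Finset.range n).powersetCard (c + 1)).filter fun t => ∃ s ∈ S, s ⊆ t

/-- The shift `T_{ij}` applied to a single set `x` of the family `S`. -/
def shiftFun (i j : ℕ) (S : Finset (Finset ℕ)) (x : Finset ℕ) : Finset ℕ :=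
  if i ∈ x ∧ j ∉ x ∧ insert j (x.erase i) ∉ S then insert j (x.erase i) else x

/-- The shift `T_{ij}(S)` of a family `S`. -/
def shift (i j : ℕ) (S : Finset (Finset ℕ)) : Finset (Finset ℕ) :=
  S.image (shiftFun i j S)

/-- `ks 0 > ks 1 > ⋯ > ks r ≥ m - r > 0` and `k = ∑_{i=0}^{r} C(ks i, m - i)`:
the `m`-binomial representation of `k`. -/
def IsMBinomialRep (m k r : ℕ) (ks : ℕ → ℕ) : Prop :=
  (∀ i < r, ks (i + 1) < ks i) ∧ m - r ≤ ks r ∧ r < m ∧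
    k = ∑ i ∈ Finset.range (r + 1), (ks i).choose (m - i)

/-- The function `f(k,n,m)` computed from the `m`-binomial representation
`k = ∑_{i=0}^{r} C(ks i, m - i)`:
`f = C(ks 0, m-1)·(n - ks 0) + ∑_{i=1}^{r} (C(ks i, m-i-1)·(n - ks 0 - 1) - C(ks i, m-i))`. -/
def fVal (n m r : ℕ) (ks : ℕ → ℕ) : ℤ :=
  ((ks 0).choose (m - 1) : ℤ) * ((n : ℤ) - ks 0) +
    ∑ i ∈ Finset.Icc 1 r,
      (((ks i).choose (m - i - 1) : ℤ) * ((n : ℤ) - ks 0 - 1) - ((ks i).choose (m - i) : ℤ))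

/-- The generalized binomial coefficient `C(x, j) = x(x-1)⋯(x-j+1)/j!` for an
integer `x` (the division is exact). -/
def genChoose (x : ℤ) (j : ℕ) : ℤ :=
  (∏ i ∈ Finset.range j, (x - i)) / (j.factorial : ℤ)

/-!
The colex initial segment with `m`-binomial representation `∑_{i ≤ r} C(ks i, m - i)` is
`cascade m ks r`: all `m`-subsets of `[ks 0]`, together with `insert (ks 0) t` for `t` in the
initial segment `F` of `(m-1)`-sets with representation `∑_{1 ≤ i ≤ r} C(ks i, m - i)`.
For a family of this shape the ball in `J(n,m)` is the disjoint union of the `m`-subsets of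
`[ks 0]`, the `m`-sets with exactly one element `≥ ks 0`, and the sets `{z, ks 0} ∪ t` with
`ks 0 < z < n` and `t` in the shadow of `F`. Taking shadows commutes with this construction,
so `|∂F| = ∑_{1 ≤ i ≤ r} C(ks i, m - i - 1)`, and subtracting `k` from the size of the ball
gives `f(k,n,m)`.
-/

open FinsetFamily Finset.Colex

namespace Finset

variable {α : Type*} [DecidableEq α] {s x y : Finset α} {a b : α} {𝒜 ℬ : Finset (Finset α)}

lemma card_symmDiff_insert_insert (ha : a ∉ s) (hb : b ∉ s) (hab : a ≠ b) :
    #(symmDiff (insert a s) (insert b s)) = 2 := by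
  have : symmDiff (insert a s) (insert b s) = {a, b} := by
    ext c
    simp only [mem_symmDiff, mem_insert, mem_singleton]
    constructor
    · rintro (⟨h | h, h'⟩ | ⟨h | h, h'⟩) <;> tauto
    · rintro (rfl | rfl) <;> simp_all [eq_comm]
  rw [this, card_pair hab]

lemma exists_eq_insert_erase_of_card_symmDiff_eq_two (hxy : #x = #y)
    (h : #(symmDiff x y) = 2) : ∃ u ∈ x, ∃ z ∉ x, y = insert z (x.erase u) := by
  rw [symmDiff_def, sup_eq_union, card_union_of_disjoint disjoint_sdiff_sdiff,
    ← card_sdiff_comm hxy] at h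
  obtain ⟨u, hu⟩ := card_eq_one.1 (show #(x \ y) = 1 by omega)
  obtain ⟨z, hz⟩ := card_eq_one.1 (show #(y \ x) = 1 by rw [← card_sdiff_comm hxy]; omega)
  have hux : u ∈ x := (mem_sdiff.1 (hu ▸ mem_singleton_self u)).1
  have hzx : z ∉ x := (mem_sdiff.1 (hz ▸ mem_singleton_self z)).2
  refine ⟨u, hux, z, hzx, ?_⟩
  rw [← sdiff_union_inter y x, hz, inter_comm, ← sdiff_sdiff_self_left, hu,
    sdiff_singleton_eq_erase, ← insert_eq]

lemma card_image₂_insert {X U : Finset α} (hXU : Disjoint X U) (h𝒜 : ∀ t ∈ 𝒜, t ⊆ U) :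
    #(image₂ insert X 𝒜) = #X * #𝒜 := by
  refine card_image₂_iff.2 fun ⟨z, t⟩ hzt ⟨z', t'⟩ hzt' he => ?_
  simp only [Set.mem_prod, mem_coe] at hzt hzt' he
  have hz : z ∉ U := disjoint_left.1 hXU hzt.1
  have hz' : z' ∉ U := disjoint_left.1 hXU hzt'.1
  have htU : insert z t ∩ U = t := by
    rw [insert_inter_of_notMem hz, inter_eq_left.2 (h𝒜 t hzt.2)]
  have ht'U : insert z' t' ∩ U = t' := by
    rw [insert_inter_of_notMem hz', inter_eq_left.2 (h𝒜 t' hzt'.2)]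
  have htt' : t = t' := by rw [← htU, he, ht'U]
  subst htt'
  have : z ∈ insert z' t := he ▸ mem_insert_self z t
  rcases mem_insert.1 this with h | h
  · rw [h]
  · exact absurd (h𝒜 t hzt.2 h) hz

lemma card_image_insert (h𝒜 : ∀ t ∈ 𝒜, a ∉ t) : #(𝒜.image (insert a)) = #𝒜 :=
  card_image_of_injOn fun t ht t' ht' h => by
    rw [← erase_insert (h𝒜 t ht), h, erase_insert (h𝒜 t' ht')]

lemma subset_of_mem_shadow {U t : Finset α} (h𝒜 : ∀ s ∈ 𝒜, s ⊆ U) (ht : t ∈ ∂ 𝒜) : t ⊆ U :=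
  let ⟨s, hs, hts⟩ := exists_subset_of_mem_shadow ht
  hts.trans (h𝒜 s hs)

lemma shadow_union : ∂ (𝒜 ∪ ℬ) = ∂ 𝒜 ∪ ∂ ℬ := sup_union

lemma shadow_powersetCard {m : ℕ} (hm : m ≠ 0) (hms : m ≤ #s) :
    ∂ (powersetCard m s) = powersetCard (m - 1) s := by
  ext t
  simp only [mem_shadow_iff_insert_mem, mem_powersetCard]
  constructor
  · rintro ⟨a, hat, hts, htm⟩
    rw [card_insert_of_notMem hat] at htm
    exact ⟨(subset_insert a t).trans hts, by omega⟩
  · rintro ⟨hts, htm⟩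
    obtain ⟨a, has, hat⟩ := exists_of_ssubset (hts.ssubset_of_ne (by rintro rfl; omega))
    exact ⟨a, hat, insert_subset has hts, by rw [card_insert_of_notMem hat]; omega⟩

lemma shadow_image_insert (h𝒜 : ∀ t ∈ 𝒜, a ∉ t) :
    ∂ (𝒜.image (insert a)) = 𝒜 ∪ (∂ 𝒜).image (insert a) := by
  ext u
  simp only [mem_union, mem_image, mem_shadow_iff]
  constructor
  · rintro ⟨_, ⟨t, ht, rfl⟩, b, hb, rfl⟩
    obtain rfl | hba := eq_or_ne b a
    · left; rwa [erase_insert (h𝒜 t ht)]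
    · right
      exact ⟨t.erase b, ⟨t, ht, b, (mem_insert.1 hb).resolve_left hba, rfl⟩,
        (erase_insert_of_ne (Ne.symm hba)).symm⟩
  · rintro (hu | ⟨_, ⟨t, ht, b, hb, rfl⟩, rfl⟩)
    · exact ⟨insert a u, ⟨u, hu, rfl⟩, a, mem_insert_self a u, erase_insert (h𝒜 u hu)⟩
    · refine ⟨insert a t, ⟨t, ht, rfl⟩, b, mem_insert_of_mem hb, ?_⟩
      rw [erase_insert_of_ne]
      rintro rfl
      exact h𝒜 t ht hb

lemma card_range_sdiff_range (c n : ℕ) : #(range n \ range c) = n - c := by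
  rw [card_sdiff, range_inter_range, card_range, card_range]
  omega

end Finset

lemma Nat.choose_lt_choose {a b c : ℕ} (hab : a < b) (hc : c ≠ 0) (hcb : c ≤ b) :
    a.choose c < b.choose c := by
  obtain ⟨b, rfl⟩ : ∃ b', b = b' + 1 := ⟨b - 1, by omega⟩
  obtain ⟨c, rfl⟩ : ∃ c', c = c' + 1 := ⟨c - 1, by omega⟩
  rw [Nat.choose_succ_succ']
  have := Nat.choose_pos (show c ≤ b by omega)
  have := Nat.choose_le_choose (c + 1) (show a ≤ b by omega)
  omega

section Johnson

variable {n m : ℕ} {S : Finset (Finset ℕ)}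

lemma card_ball : #(ball n m S) = #S + #(boundary n m S) :=
  card_union_of_disjoint <| disjoint_left.2 fun _ hy hy' => (mem_filter.1 hy').2.1 hy

lemma mem_ball_of_card_symmDiff_eq_two {x y : Finset ℕ} (hy : y ∈ johnsonVerts n m) (hx : x ∈ S)
    (hxy : #(symmDiff x y) = 2) : y ∈ ball n m S := by
  by_cases hyS : y ∈ S
  · exact mem_union_left _ hyS
  · exact mem_union_right _ (mem_filter.2 ⟨hy, hyS, x, hx, hxy⟩)

lemma colexInitSeg_card_eq_self (hSJ : S ⊆ johnsonVerts n m) (hS : IsInitSeg S m) :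
    colexInitSeg n m #S = S := by
  ext s
  simp only [colexInitSeg, mem_filter]
  constructor
  · rintro ⟨hs, hlt⟩
    by_contra hsS
    refine hlt.not_ge (card_le_card fun t ht => mem_filter.2 ⟨hSJ ht, ?_⟩)
    refine lt_of_not_ge fun hst => hsS ?_
    obtain hst | hst := hst.eq_or_lt
    · rwa [toColex_inj.1 hst]
    · exact hS.2 ht ⟨hst, (mem_powersetCard.1 hs).2⟩
  · intro hs
    refine ⟨hSJ hs, ?_⟩
    calc #((johnsonVerts n m).filter fun t => toColex t < toColex s)
        ≤ #(S.erase s) := card_le_card fun t ht => by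
          obtain ⟨htJ, hts⟩ := mem_filter.1 ht
          exact mem_erase.2 ⟨by rintro rfl; exact hts.false,
            hS.2 hs ⟨hts, (mem_powersetCard.1 htJ).2⟩⟩
      _ < #S := card_erase_lt_of_mem hs

end Johnson

def adjoinTop (m c : ℕ) (F : Finset (Finset ℕ)) : Finset (Finset ℕ) :=
  powersetCard m (range c) ∪ F.image (insert c)

section adjoinTop

variable {n m c : ℕ} {F : Finset (Finset ℕ)}

lemma card_adjoinTop (hF : ∀ t ∈ F, c ∉ t) : #(adjoinTop m c F) = c.choose m + #F := by
  rw [adjoinTop, card_union_of_disjoint, card_powersetCard, card_range, card_image_insert hF]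
  refine disjoint_left.2 fun s hs hs' => ?_
  obtain ⟨t, -, rfl⟩ := mem_image.1 hs'
  exact notMem_range_self ((mem_powersetCard.1 hs).1 (mem_insert_self c t))

lemma adjoinTop_subset_powersetCard (hm : m ≠ 0) (hF : F ⊆ powersetCard (m - 1) (range c)) :
    adjoinTop m c F ⊆ powersetCard m (range (c + 1)) := by
  refine union_subset (powersetCard_mono (range_subset_range.2 c.le_succ)) fun s hs => ?_
  obtain ⟨t, ht, rfl⟩ := mem_image.1 hs
  obtain ⟨htc, htm⟩ := mem_powersetCard.1 (hF ht)
  refine mem_powersetCard.2 ⟨?_, ?_⟩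
  · rw [range_add_one]
    exact insert_subset_insert c htc
  · rw [card_insert_of_notMem fun h => notMem_range_self (htc h)]
    omega

lemma isInitSeg_adjoinTop (hm : m ≠ 0) (hF : IsInitSeg F (m - 1))
    (hFc : F ⊆ powersetCard (m - 1) (range c)) : IsInitSeg (adjoinTop m c F) m := by
  refine ⟨fun s hs => (mem_powersetCard.1 (adjoinTop_subset_powersetCard hm hFc hs)).2,
    fun s t hs ⟨hts, htm⟩ => ?_⟩
  have hlt : ∀ {u : Finset ℕ}, u ⊆ range c → toColex t ≤ toColex u → t ∈ adjoinTop m c F :=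
    fun hu htu => mem_union_left _ <| mem_powersetCard.2
      ⟨fun b hb => mem_range.2 (forall_lt_mono htu (fun a ha => mem_range.1 (hu ha)) b hb), htm⟩
  have hsc := (mem_powersetCard.1 (adjoinTop_subset_powersetCard hm hFc hs)).1
  obtain hs | hs := mem_union.1 hs
  · exact hlt (mem_powersetCard.1 hs).1 hts.le
  obtain ⟨s', hs', rfl⟩ := mem_image.1 hs
  have hcs' : c ∉ s' := fun h => notMem_range_self ((mem_powersetCard.1 (hFc hs')).1 h)
  by_cases hct : c ∈ t
  · have : toColex (t \ {c}) < toColex (insert c s' \ {c}) :=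
      (toColex_sdiff_lt_toColex_sdiff (singleton_subset_iff.2 hct)
        (singleton_subset_iff.2 (mem_insert_self c s'))).2 hts
    rw [sdiff_singleton_eq_erase, sdiff_singleton_eq_erase, erase_insert hcs'] at this
    refine mem_union_right _ (mem_image.2 ⟨t.erase c, hF.2 hs' ⟨this, ?_⟩, insert_erase hct⟩)
    rw [card_erase_of_mem hct, htm]
  · refine hlt (u := t) (fun b hb => mem_range.2 ?_) le_rfl
    have := forall_lt_mono hts.le (fun a ha => mem_range.1 (hsc ha)) b hb
    exact lt_of_le_of_ne (Nat.lt_succ_iff.1 this) (by rintro rfl; exact hct hb)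

lemma shadow_adjoinTop (hm : m ≠ 0) (hmc : m ≤ c) (hF : F ⊆ powersetCard (m - 1) (range c)) :
    ∂ (adjoinTop m c F) = adjoinTop (m - 1) c (∂ F) := by
  rw [adjoinTop, adjoinTop, shadow_union, shadow_powersetCard hm (by rwa [card_range]),
    shadow_image_insert fun t ht h => notMem_range_self ((mem_powersetCard.1 (hF ht)).1 h),
    ← union_assoc, union_eq_left.2 hF]

def oneAbove (n m c : ℕ) : Finset (Finset ℕ) :=
  image₂ insert (range n \ range c) (powersetCard (m - 1) (range c))

def pairAbove (n c : ℕ) (𝒢 : Finset (Finset ℕ)) : Finset (Finset ℕ) :=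
  image₂ insert (range n \ range (c + 1)) (𝒢.image (insert c))

lemma adjoinTop_subset_johnsonVerts (hm : m ≠ 0) (hcn : c ≤ n)
    (hF : F ⊆ powersetCard (m - 1) (range c)) (hFn : c < n ∨ F = ∅) :
    adjoinTop m c F ⊆ johnsonVerts n m := by
  obtain hcn | rfl := hFn
  · exact (adjoinTop_subset_powersetCard hm hF).trans (powersetCard_mono (range_subset_range.2 hcn))
  · simpa [adjoinTop, johnsonVerts] using powersetCard_mono (range_subset_range.2 hcn)

lemma mem_powersetCard_union_oneAbove {y : Finset ℕ} (z : ℕ) (hy : y ∈ johnsonVerts n m)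
    (hyz : ∀ a ∈ y, a ≠ z → a < c) :
    y ∈ powersetCard m (range c) ∪ oneAbove n m c := by
  obtain ⟨hyn, hym⟩ := mem_powersetCard.1 hy
  by_cases hz : z ∈ y ∧ c ≤ z
  · refine mem_union_right _ (mem_image₂.2 ⟨z, ?_, y.erase z, ?_, insert_erase hz.1⟩)
    · exact mem_sdiff.2 ⟨hyn hz.1, fun h => (mem_range.1 h).not_ge hz.2⟩
    · refine mem_powersetCard.2 ⟨fun a ha => mem_range.2 ?_, by rw [card_erase_of_mem hz.1, hym]⟩
      exact hyz a (mem_of_mem_erase ha) (ne_of_mem_erase ha)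
  · refine mem_union_left _ (mem_powersetCard.2 ⟨fun a ha => mem_range.2 ?_, hym⟩)
    obtain rfl | haz := eq_or_ne a z
    · exact lt_of_not_ge fun h => hz ⟨ha, h⟩
    · exact hyz a ha haz

lemma ball_adjoinTop_subset (hm : m ≠ 0) (hF : F ⊆ powersetCard (m - 1) (range c))
    (hSJ : adjoinTop m c F ⊆ johnsonVerts n m) :
    ball n m (adjoinTop m c F) ⊆
      powersetCard m (range c) ∪ oneAbove n m c ∪ pairAbove n c (∂ F) := by
  intro y hy
  obtain hyS | hyB := mem_union.1 hy
  · refine mem_union_left _ (mem_powersetCard_union_oneAbove c (hSJ hyS) fun a ha hac => ?_)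
    have := mem_range.1 ((mem_powersetCard.1 (adjoinTop_subset_powersetCard hm hF hyS)).1 ha)
    omega
  obtain ⟨hyJ, -, x, hxS, hxy⟩ := mem_filter.1 hyB
  obtain ⟨u, hux, z, hzx, rfl⟩ := exists_eq_insert_erase_of_card_symmDiff_eq_two
    (by rw [(mem_powersetCard.1 (hSJ hxS)).2, (mem_powersetCard.1 hyJ).2]) hxy
  -- `y` has at most one element `≥ c` unless `x = insert c x'` with `u ≠ c` and `c < z`
  have hmem : ∀ a ∈ insert z (x.erase u), a ≠ z → a ≠ u ∧ a ∈ x := fun a ha haz =>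
    mem_erase.1 ((mem_insert.1 ha).resolve_left haz)
  obtain hx0 | hx1 := mem_union.1 hxS
  · exact mem_union_left _ <| mem_powersetCard_union_oneAbove z hyJ fun a ha haz =>
      mem_range.1 ((mem_powersetCard.1 hx0).1 (hmem a ha haz).2)
  obtain ⟨x, hx, rfl⟩ := mem_image.1 hx1
  have hxc : ∀ a ∈ insert c x, a ≠ c → a < c := fun a ha hac =>
    mem_range.1 ((mem_powersetCard.1 (hF hx)).1 ((mem_insert.1 ha).resolve_left hac))
  by_cases huc : u = c
  · subst huc
    exact mem_union_left _ <| mem_powersetCard_union_oneAbove z hyJ fun a ha haz =>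
      hxc a (hmem a ha haz).2 (hmem a ha haz).1
  by_cases hzc : z < c
  · refine mem_union_left _ <| mem_powersetCard_union_oneAbove c hyJ fun a ha hac => ?_
    obtain rfl | haz := eq_or_ne a z
    · exact hzc
    · exact hxc a (hmem a ha haz).2 hac
  refine mem_union_right _ (mem_image₂.2 ⟨z, mem_sdiff.2 ⟨?_, ?_⟩, insert c (x.erase u),
    mem_image_of_mem _ (erase_mem_shadow hx ?_), by rw [erase_insert_of_ne (Ne.symm huc)]⟩)
  · exact (mem_powersetCard.1 hyJ).1 (mem_insert_self z _)
  · rw [mem_range]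
    have : z ≠ c := fun h => hzx (h ▸ mem_insert_self c x)
    omega
  · exact (mem_insert.1 hux).resolve_left huc

lemma oneAbove_subset_ball (hm : m ≠ 0) (hmc : m ≤ c) (hcn : c ≤ n) :
    oneAbove n m c ⊆ ball n m (adjoinTop m c F) := by
  intro y hy
  obtain ⟨z, hz, A, hA, rfl⟩ := mem_image₂.1 hy
  obtain ⟨hzn, hzc⟩ := mem_sdiff.1 hz
  obtain ⟨hAc, hAm⟩ := mem_powersetCard.1 hA
  obtain ⟨v, hvc, hvA⟩ := exists_mem_notMem_of_card_lt_card
    (show #A < #(range c) by rw [hAm, card_range]; omega)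
  have hzA : z ∉ A := fun h => hzc (hAc h)
  refine mem_ball_of_card_symmDiff_eq_two (x := insert v A) ?_ ?_
    (card_symmDiff_insert_insert hvA hzA (by rintro rfl; exact hzc hvc))
  · refine mem_powersetCard.2 ⟨insert_subset hzn (hAc.trans (range_subset_range.2 hcn)), ?_⟩
    rw [card_insert_of_notMem hzA]
    omega
  · refine mem_union_left _ (mem_powersetCard.2 ⟨insert_subset hvc hAc, ?_⟩)
    rw [card_insert_of_notMem hvA]
    omega

lemma pairAbove_shadow_subset_ball (hcn : c ≤ n) (hF : F ⊆ powersetCard (m - 1) (range c)) :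
    pairAbove n c (∂ F) ⊆ ball n m (adjoinTop m c F) := by
  intro y hy
  obtain ⟨z, hz, _, ht', rfl⟩ := mem_image₂.1 hy
  obtain ⟨t, ht, rfl⟩ := mem_image.1 ht'
  obtain ⟨v, hvt, hvtF⟩ := mem_shadow_iff_insert_mem.1 ht
  obtain ⟨hvtc, hvtm⟩ := mem_powersetCard.1 (hF hvtF)
  obtain ⟨hzn, hzc⟩ := mem_sdiff.1 hz
  rw [mem_range] at hzn
  rw [mem_range, not_lt] at hzc
  have hvc : v < c := mem_range.1 (hvtc (mem_insert_self v t))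
  have htc : t ⊆ range c := (subset_insert v t).trans hvtc
  have hct : c ∉ t := fun h => notMem_range_self (htc h)
  have hzt : z ∉ t := fun h => by have := mem_range.1 (htc h); omega
  rw [card_insert_of_notMem hvt] at hvtm
  refine mem_ball_of_card_symmDiff_eq_two (x := insert v (insert c t)) ?_ ?_
    (card_symmDiff_insert_insert (by simp [hvt]; omega) (by simp [hzt]; omega) (by omega))
  · refine mem_powersetCard.2 ⟨insert_subset (mem_range.2 hzn)
      (insert_subset (mem_range.2 (by omega)) (htc.trans (range_subset_range.2 hcn))), ?_⟩
    rw [card_insert_of_notMem (by simp [hzt]; omega), card_insert_of_notMem hct]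
    omega
  · rw [insert_comm]
    exact mem_union_right _ (mem_image_of_mem _ hvtF)

lemma ball_adjoinTop (hm : m ≠ 0) (hmc : m ≤ c) (hcn : c ≤ n)
    (hF : F ⊆ powersetCard (m - 1) (range c)) (hFn : c < n ∨ F = ∅) :
    ball n m (adjoinTop m c F) = powersetCard m (range c) ∪ oneAbove n m c ∪ pairAbove n c (∂ F) :=
  (ball_adjoinTop_subset hm hF (adjoinTop_subset_johnsonVerts hm hcn hF hFn)).antisymm <|
    union_subset (union_subset (fun _ hy => mem_union_left _ (mem_union_left _ hy))
      (oneAbove_subset_ball hm hmc hcn))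
      (pairAbove_shadow_subset_ball hcn hF)

lemma disjoint_powersetCard_oneAbove : Disjoint (powersetCard m (range c)) (oneAbove n m c) := by
  refine disjoint_left.2 fun y hy hy' => ?_
  obtain ⟨z, hz, A, -, rfl⟩ := mem_image₂.1 hy'
  exact (mem_sdiff.1 hz).2 ((mem_powersetCard.1 hy).1 (mem_insert_self z A))

lemma disjoint_union_oneAbove_pairAbove {𝒢 : Finset (Finset ℕ)} :
    Disjoint (powersetCard m (range c) ∪ oneAbove n m c) (pairAbove n c 𝒢) := by
  refine disjoint_left.2 fun y hy hy' => ?_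
  obtain ⟨z, hz, _, ht', rfl⟩ := mem_image₂.1 hy'
  obtain ⟨t, -, rfl⟩ := mem_image.1 ht'
  have hzc : c < z := by simpa using (mem_sdiff.1 hz).2
  obtain hy | hy := mem_union.1 hy
  · exact notMem_range_self ((mem_powersetCard.1 hy).1 (mem_insert_of_mem (mem_insert_self c t)))
  obtain ⟨z', -, A, hA, he⟩ := mem_image₂.1 hy
  have hAc := (mem_powersetCard.1 hA).1
  -- both `z` and `c` would have to be the only element of `insert z' A` outside `range c`
  have hmem : ∀ a ∈ insert z (insert c t), c ≤ a → a = z' := fun a ha hca =>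
    (mem_insert.1 (he ▸ ha)).resolve_right fun h => (mem_range.1 (hAc h)).not_ge hca
  have := (hmem z (mem_insert_self _ _) hzc.le).trans
    (hmem c (mem_insert_of_mem (mem_insert_self _ _)) le_rfl).symm
  omega

lemma card_oneAbove : #(oneAbove n m c) = (n - c) * c.choose (m - 1) := by
  rw [oneAbove, card_image₂_insert disjoint_sdiff_self_left fun A hA => (mem_powersetCard.1 hA).1,
    card_range_sdiff_range, card_powersetCard, card_range]

lemma card_pairAbove {𝒢 : Finset (Finset ℕ)} (h𝒢 : ∀ t ∈ 𝒢, t ⊆ range c) :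
    #(pairAbove n c 𝒢) = (n - (c + 1)) * #𝒢 := by
  rw [pairAbove, card_image₂_insert disjoint_sdiff_self_left, card_range_sdiff_range,
    card_image_insert fun t ht h => notMem_range_self (h𝒢 t ht h)]
  intro s hs
  obtain ⟨t, ht, rfl⟩ := mem_image.1 hs
  rw [range_add_one]
  exact insert_subset_insert c (h𝒢 t ht)

lemma card_ball_adjoinTop (hm : m ≠ 0) (hmc : m ≤ c) (hcn : c ≤ n)
    (hF : F ⊆ powersetCard (m - 1) (range c)) (hFn : c < n ∨ F = ∅) :
    #(ball n m (adjoinTop m c F)) =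
      c.choose m + (n - c) * c.choose (m - 1) + (n - (c + 1)) * #(∂ F) := by
  rw [ball_adjoinTop hm hmc hcn hF hFn, card_union_of_disjoint disjoint_union_oneAbove_pairAbove,
    card_union_of_disjoint disjoint_powersetCard_oneAbove, card_powersetCard, card_range,
    card_oneAbove, card_pairAbove fun t =>
      subset_of_mem_shadow fun s hs => (mem_powersetCard.1 (hF hs)).1]

lemma card_boundary_adjoinTop (hm : m ≠ 0) (hmc : m ≤ c) (hcn : c ≤ n)
    (hF : F ⊆ powersetCard (m - 1) (range c)) (hFn : c < n ∨ F = ∅) :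
    (#(boundary n m (adjoinTop m c F)) : ℤ) =
      c.choose (m - 1) * ((n : ℤ) - c) + #(∂ F) * ((n : ℤ) - c - 1) - #F := by
  have h := (card_ball (n := n) (m := m) (S := adjoinTop m c F)).symm
  rw [card_ball_adjoinTop hm hmc hcn hF hFn, card_adjoinTop fun t ht h =>
    notMem_range_self ((mem_powersetCard.1 (hF ht)).1 h)] at h
  obtain hcn' | rfl := hFn
  · zify [hcn, Nat.succ_le_of_lt hcn'] at h
    linarith
  · zify [hcn] at h
    simp only [shadow_empty, card_empty, CharP.cast_eq_zero] at h ⊢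
    linarith

end adjoinTop

def cascade : ℕ → (ℕ → ℕ) → ℕ → Finset (Finset ℕ)
  | m, ks, 0 => adjoinTop m (ks 0) ∅
  | m, ks, r + 1 => adjoinTop m (ks 0) (cascade (m - 1) (fun i => ks (i + 1)) r)

section cascade

variable {n m r : ℕ} {ks : ℕ → ℕ}

lemma le_apply_zero_of_sub_le (hks : ∀ i < r, ks (i + 1) < ks i) (hge : m - r ≤ ks r) :
    m ≤ ks 0 := by
  induction r generalizing m ks with
  | zero => simpa using hge
  | succ r ih =>
    have := ih (m := m - 1) (ks := fun i => ks (i + 1)) (fun i hi => hks (i + 1) (by omega))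
      (by omega)
    have := hks 0 (by omega)
    omega

lemma cascade_subset_powersetCard (hks : ∀ i < r, ks (i + 1) < ks i) (hrm : r < m) :
    cascade m ks r ⊆ powersetCard m (range (ks 0 + 1)) := by
  induction r generalizing m ks with
  | zero => exact adjoinTop_subset_powersetCard (by omega) (empty_subset _)
  | succ r ih =>
    exact adjoinTop_subset_powersetCard (by omega) <|
      (ih (fun i hi => hks (i + 1) (by omega)) (by omega)).trans <|
        powersetCard_mono (range_subset_range.2 (hks 0 (by omega)))

lemma cascade_tail_subset (hks : ∀ i < r + 1, ks (i + 1) < ks i) (hrm : r + 1 < m) :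
    cascade (m - 1) (fun i => ks (i + 1)) r ⊆ powersetCard (m - 1) (range (ks 0)) :=
  (cascade_subset_powersetCard (fun i hi => hks (i + 1) (by omega)) (by omega)).trans <|
    powersetCard_mono (range_subset_range.2 (hks 0 (by omega)))

lemma card_cascade (hks : ∀ i < r, ks (i + 1) < ks i) (hrm : r < m) :
    #(cascade m ks r) = ∑ i ∈ range (r + 1), (ks i).choose (m - i) := by
  induction r generalizing m ks with
  | zero => simp [cascade, card_adjoinTop]
  | succ r ih =>
    rw [cascade, card_adjoinTop, ih (fun i hi => hks (i + 1) (by omega)) (by omega),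
      sum_range_succ' _ (r + 1), add_comm]
    · simp only [Nat.sub_sub, add_comm 1, Nat.sub_zero]
    · exact fun t ht h =>
        notMem_range_self ((mem_powersetCard.1 (cascade_tail_subset hks hrm ht)).1 h)

lemma isInitSeg_cascade (hks : ∀ i < r, ks (i + 1) < ks i) (hrm : r < m) :
    IsInitSeg (cascade m ks r) m := by
  induction r generalizing m ks with
  | zero => exact isInitSeg_adjoinTop (by omega) isInitSeg_empty (empty_subset _)
  | succ r ih =>
    exact isInitSeg_adjoinTop (by omega) (ih (fun i hi => hks (i + 1) (by omega)) (by omega))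
      (cascade_tail_subset hks hrm)

lemma card_shadow_cascade (hks : ∀ i < r, ks (i + 1) < ks i) (hrm : r < m) (hge : m - r ≤ ks r) :
    #(∂ (cascade m ks r)) = ∑ i ∈ range (r + 1), (ks i).choose (m - i - 1) := by
  induction r generalizing m ks with
  | zero =>
    rw [cascade, shadow_adjoinTop (by omega) (le_apply_zero_of_sub_le hks hge) (empty_subset _)]
    simp [card_adjoinTop]
  | succ r ih =>
    have hF := cascade_tail_subset hks hrm
    rw [cascade, shadow_adjoinTop (by omega) (le_apply_zero_of_sub_le hks hge) hF, card_adjoinTop,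
      ih (fun i hi => hks (i + 1) (by omega)) (by omega) (by omega),
      sum_range_succ' _ (r + 1), add_comm]
    · simp only [Nat.sub_sub, add_comm 1]
    · exact fun t ht h => notMem_range_self <| subset_of_mem_shadow
        (fun s hs => (mem_powersetCard.1 (hF hs)).1) ht h

lemma cascade_subset_johnsonVerts (hks : ∀ i < r, ks (i + 1) < ks i) (hrm : r < m)
    (hn : ks 0 ≤ n) (hn' : 0 < r → ks 0 < n) : cascade m ks r ⊆ johnsonVerts n m := by
  cases r with
  | zero => exact adjoinTop_subset_johnsonVerts (by omega) hn (empty_subset _) (Or.inr rfl)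
  | succ r =>
    exact adjoinTop_subset_johnsonVerts (by omega) hn (cascade_tail_subset hks hrm)
      (Or.inl (hn' r.succ_pos))

lemma card_boundary_cascade (hks : ∀ i < r, ks (i + 1) < ks i) (hrm : r < m) (hge : m - r ≤ ks r)
    (hn : ks 0 ≤ n) (hn' : 0 < r → ks 0 < n) :
    (#(boundary n m (cascade m ks r)) : ℤ) = fVal n m r ks := by
  have hmc := le_apply_zero_of_sub_le hks hge
  cases r with
  | zero =>
    rw [cascade, card_boundary_adjoinTop (by omega) hmc hn (empty_subset _) (Or.inr rfl)]
    simp [fVal]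
  | succ r =>
    rw [cascade, card_boundary_adjoinTop (by omega) hmc hn (cascade_tail_subset hks hrm)
      (Or.inl (hn' r.succ_pos)), fVal, card_cascade (fun i hi => hks (i + 1) (by omega)) (by omega),
      card_shadow_cascade (fun i hi => hks (i + 1) (by omega)) (by omega) (by omega),
      ← Ico_add_one_right_eq_Icc, sum_Ico_eq_sum_range, add_tsub_cancel_right, sum_sub_distrib,
      ← sum_mul]
    simp only [Nat.sub_sub, add_comm 1]
    push_cast
    ring

lemma apply_zero_le_of_sum_choose_le (hks : ∀ i < r, ks (i + 1) < ks i)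
    (hrm : r < m) (hge : m - r ≤ ks r)
    (hkn : ∑ i ∈ range (r + 1), (ks i).choose (m - i) ≤ n.choose m) : ks 0 ≤ n := by
  by_contra! hn
  have := Nat.choose_lt_choose hn (by omega) (le_apply_zero_of_sub_le hks hge)
  have := single_le_sum (f := fun i => (ks i).choose (m - i)) (fun _ _ => Nat.zero_le _)
    (mem_range.2 (by omega : 0 < r + 1))
  simp only [Nat.sub_zero] at this
  omega

lemma apply_zero_lt_of_sum_choose_le (hge : m - r ≤ ks r) (hr : 0 < r)
    (hkn : ∑ i ∈ range (r + 1), (ks i).choose (m - i) ≤ n.choose m) : ks 0 < n := by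
  by_contra! hn
  rw [sum_range_succ] at hkn
  have := single_le_sum (f := fun i => (ks i).choose (m - i)) (fun _ _ => Nat.zero_le _)
    (mem_range.2 hr)
  simp only [Nat.sub_zero] at this
  have := Nat.choose_pos hge
  have := Nat.choose_le_choose m hn
  omega

end cascade

theorem card_boundary_colexInitSeg_general
    (n m k r : ℕ) (ks : ℕ → ℕ)
    (hkn : k ≤ n.choose m)
    (hrep : IsMBinomialRep m k r ks) :
    ((boundary n m (colexInitSeg n m k)).card : ℤ) = fVal n m r ks := by
  obtain ⟨hks, hge, hrm, rfl⟩ := hrep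
  have hn := apply_zero_le_of_sum_choose_le hks hrm hge hkn
  have hn' := fun hr => apply_zero_lt_of_sum_choose_le hge hr hkn
  rw [← card_cascade hks hrm, colexInitSeg_card_eq_self (cascade_subset_johnsonVerts hks hrm hn hn')
    (isInitSeg_cascade hks hrm)]
  exact card_boundary_cascade hks hrm hge hn hn'

/-- For `1 ≤ m ≤ n`, `1 ≤ k ≤ C(n,m)`, the boundary of the
initial segment of length `k` in the colex order on `m`-subsets of `[n]`
has cardinality `f(k,n,m)`, where `k = ∑_{i=0}^{r} C(ks i, m-i)` is the
`m`-binomial representation of `k`. -/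
theorem card_boundary_colexInitSeg
    (n m k r : ℕ) (ks : ℕ → ℕ)
    (hm : 1 ≤ m) (hmn : m ≤ n) (hk : 1 ≤ k) (hkn : k ≤ n.choose m)
    (hrep : IsMBinomialRep m k r ks) :
    ((boundary n m (colexInitSeg n m k)).card : ℤ) = fVal n m r ks :=
  card_boundary_colexInitSeg_general n m k r ks hkn hrep
end

section
/- Let 1 ≤ m ≤ n, let i, j ∈ [n] with i ≠ j, write T = T_{ij}, and let S be a family of m-element subsets of [n], viewed as vertices of the Johnson graph J(n,m). Then B(T(S)) ⊆ T(B(S)), where B denotes the ball in J(n,m). -/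
open Finset

/-! The transposition `σ = (i j)` is an automorphism of `J(n,m)`, and a set `z` lies in `T(F)`
iff `z` or `σz` lies in `F`, both being required when `i ∈ z` and `j ∉ z`. As `T(S) ⊆ S ∪ σS`,
every vertex of `B(T S)` lies in `B(S) ∪ σB(S)`. When `i ∈ z`, `j ∉ z`, a neighbour `y ∈ T(S)` of
`z` either contains `i` whenever it contains `j`, and then `y, σy ∈ S` are close to `z, σz`,
or it is `σz` itself, which is adjacent to `z` while one of `z, σz` lies in `S`. -/

def swapSet (i j : ℕ) (x : Finset ℕ) : Finset ℕ :=
  x.map (Equiv.swap i j).toEmbedding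

def AdjOrEq (x z : Finset ℕ) : Prop :=
  x = z ∨ #(symmDiff x z) = 2

section Swap

variable {i j n m : ℕ} {x z : Finset ℕ}

@[simp]
lemma mem_swapSet {t : ℕ} : t ∈ swapSet i j x ↔ Equiv.swap i j t ∈ x := by
  simp [swapSet, mem_map_equiv, Equiv.symm_swap]

@[simp]
lemma swapSet_swapSet : swapSet i j (swapSet i j x) = x := by
  ext t; simp

lemma swapSet_eq_self (h : i ∈ x ↔ j ∈ x) : swapSet i j x = x := by
  ext t
  rw [mem_swapSet, Equiv.swap_apply_def]
  split_ifs with hti htj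
  · subst hti; exact h.symm
  · subst htj; exact h
  · rfl

lemma swapSet_eq_insert_erase (hi : i ∈ x) (hj : j ∉ x) :
    swapSet i j x = insert j (x.erase i) := by
  ext t
  rw [mem_swapSet, Equiv.swap_apply_def, mem_insert, mem_erase]
  split_ifs with hti htj <;> grind

lemma symmDiff_swapSet : symmDiff (swapSet i j x) (swapSet i j z) = swapSet i j (symmDiff x z) := by
  ext t; simp [mem_symmDiff]

lemma card_swapSet : #(swapSet i j x) = #x := card_map _

lemma symmDiff_swapSet_self (h : ¬(i ∈ x ↔ j ∈ x)) : symmDiff x (swapSet i j x) = {i, j} := by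
  ext t
  rw [mem_symmDiff, mem_swapSet, Equiv.swap_apply_def, mem_insert, mem_singleton]
  split_ifs with hti htj <;> grind

lemma swapSet_mem_johnsonVerts (hi : i < n) (hj : j < n) (hx : x ∈ johnsonVerts n m) :
    swapSet i j x ∈ johnsonVerts n m := by
  rw [johnsonVerts, mem_powersetCard] at hx ⊢
  refine ⟨fun t ht => ?_, card_swapSet.trans hx.2⟩
  have := hx.1 (mem_swapSet.1 ht)
  rw [mem_range, Equiv.swap_apply_def] at *
  split_ifs at this <;> grind

end Swap

section AdjOrEq

variable {i j : ℕ} {x y z : Finset ℕ}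

lemma AdjOrEq.symm (h : AdjOrEq x z) : AdjOrEq z x := by
  rcases h with rfl | h
  · exact Or.inl rfl
  · exact Or.inr (by rwa [symmDiff_comm])

lemma AdjOrEq.swapSet (h : AdjOrEq x z) : AdjOrEq (swapSet i j x) (swapSet i j z) := by
  rcases h with rfl | h
  · exact Or.inl rfl
  · exact Or.inr (by rwa [symmDiff_swapSet, card_swapSet])

lemma adjOrEq_swapSet_self (x : Finset ℕ) : AdjOrEq x (swapSet i j x) := by
  by_cases h : i ∈ x ↔ j ∈ x
  · exact Or.inl (swapSet_eq_self h).symm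
  · have hij : i ≠ j := by rintro rfl; exact h Iff.rfl
    exact Or.inr (by rw [symmDiff_swapSet_self h, card_pair hij])

lemma eq_swapSet_of_adjOrEq (hiz : i ∈ z) (hjz : j ∉ z) (hiy : i ∉ y) (hjy : j ∈ y)
    (h : AdjOrEq y z) : y = swapSet i j z := by
  have hij : i ≠ j := by rintro rfl; exact hjz hiz
  have hyz : #(symmDiff y z) = 2 := h.resolve_left (by rintro rfl; exact hiy hiz)
  have hpair : {i, j} = symmDiff y z :=
    eq_of_subset_of_card_le (by simp [insert_subset_iff, mem_symmDiff, *])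
      (by rw [hyz, card_pair hij])
  rw [← symmDiff_left_inj (b := z), symmDiff_comm (swapSet i j z),
    symmDiff_swapSet_self (by simp [hiz, hjz]), hpair]

end AdjOrEq

section BallShift

variable {n m i j : ℕ} {F S : Finset (Finset ℕ)} {x z : Finset ℕ}

lemma mem_ball_of_adjOrEq (hz : z ∈ johnsonVerts n m) (hx : x ∈ F) (h : AdjOrEq x z) :
    z ∈ ball n m F := by
  rcases h with rfl | h
  · exact mem_union_left _ hx
  · by_cases hzF : z ∈ F
    · exact mem_union_left _ hzF
    · exact mem_union_right _ (mem_filter.2 ⟨hz, hzF, x, hx, h⟩)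

lemma exists_adjOrEq_of_mem_ball (hF : F ⊆ johnsonVerts n m) (hz : z ∈ ball n m F) :
    z ∈ johnsonVerts n m ∧ ∃ x ∈ F, AdjOrEq x z := by
  rcases mem_union.1 hz with hz | hz
  · exact ⟨hF hz, z, hz, Or.inl rfl⟩
  · obtain ⟨hzJ, -, x, hx, h⟩ := mem_filter.1 hz
    exact ⟨hzJ, x, hx, Or.inr h⟩

lemma shiftFun_eq_swapSet (hi : i ∈ x) (hj : j ∉ x) (hF : swapSet i j x ∉ F) :
    shiftFun i j F x = swapSet i j x := by
  rw [swapSet_eq_insert_erase hi hj] at hF ⊢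
  exact if_pos ⟨hi, hj, hF⟩

lemma shiftFun_eq_self (h : ¬(i ∈ x ∧ j ∉ x ∧ swapSet i j x ∉ F)) : shiftFun i j F x = x := by
  refine if_neg fun ⟨hi, hj, hF⟩ => h ⟨hi, hj, ?_⟩
  rwa [swapSet_eq_insert_erase hi hj]

lemma mem_shift_iff :
    z ∈ shift i j F ↔
      (z ∈ F ∨ swapSet i j z ∈ F) ∧ (i ∈ z → j ∉ z → z ∈ F ∧ swapSet i j z ∈ F) := by
  constructor
  · intro hz
    obtain ⟨x, hxF, rfl⟩ := mem_image.1 hz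
    by_cases h : i ∈ x ∧ j ∉ x ∧ swapSet i j x ∉ F
    · rw [shiftFun_eq_swapSet h.1 h.2.1 h.2.2, swapSet_swapSet]
      refine ⟨Or.inr hxF, fun hi _ => absurd (mem_swapSet.1 hi) ?_⟩
      simpa [Equiv.swap_apply_left] using h.2.1
    · rw [shiftFun_eq_self h]
      exact ⟨Or.inl hxF, fun hi hj => ⟨hxF, not_not.1 fun hs => h ⟨hi, hj, hs⟩⟩⟩
  · rintro ⟨hz, himp⟩
    by_cases hzF : z ∈ F
    · exact mem_image.2 ⟨z, hzF, shiftFun_eq_self fun ⟨hi, hj, hs⟩ => hs (himp hi hj).2⟩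
    have hsz : swapSet i j z ∈ F := hz.resolve_left hzF
    have hiz : i ∉ z := fun hi =>
      hzF (himp hi fun hj => hzF (swapSet_eq_self (iff_of_true hi hj) ▸ hsz)).1
    have hjz : j ∈ z := by_contra fun hj => hzF (swapSet_eq_self (iff_of_false hiz hj) ▸ hsz)
    refine mem_image.2 ⟨swapSet i j z, hsz, ?_⟩
    rw [shiftFun_eq_swapSet (by simpa using hjz) (by simpa using hiz) (by simpa using hzF),
      swapSet_swapSet]

lemma shift_subset_johnsonVerts (hi : i < n) (hj : j < n) (hF : F ⊆ johnsonVerts n m) :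
    shift i j F ⊆ johnsonVerts n m := fun z hz =>
  (mem_shift_iff.1 hz).1.elim (fun hzF => hF hzF) fun hsz =>
    swapSet_swapSet (x := z) ▸ swapSet_mem_johnsonVerts hi hj (hF hsz)

lemma mem_and_swapSet_mem_of_mem_shift (hz : z ∈ shift i j F) (hji : j ∈ z → i ∈ z) :
    z ∈ F ∧ swapSet i j z ∈ F := by
  obtain ⟨hor, himp⟩ := mem_shift_iff.1 hz
  by_cases h : i ∈ z ↔ j ∈ z
  · rw [swapSet_eq_self h, or_self] at hor
    rw [swapSet_eq_self h]
    exact ⟨hor, hor⟩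
  · exact himp (by tauto) (by tauto)

lemma mem_ball_or_swapSet_mem_ball (hi : i < n) (hj : j < n) (hS : S ⊆ johnsonVerts n m)
    (hz : z ∈ ball n m (shift i j S)) : z ∈ ball n m S ∨ swapSet i j z ∈ ball n m S := by
  obtain ⟨hzJ, y, hy, hyz⟩ := exists_adjOrEq_of_mem_ball (shift_subset_johnsonVerts hi hj hS) hz
  rcases (mem_shift_iff.1 hy).1 with hyS | hsyS
  · exact Or.inl (mem_ball_of_adjOrEq hzJ hyS hyz)
  · exact Or.inr (mem_ball_of_adjOrEq (swapSet_mem_johnsonVerts hi hj hzJ) hsyS hyz.swapSet)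

lemma mem_ball_and_swapSet_mem_ball (hi : i < n) (hj : j < n) (hS : S ⊆ johnsonVerts n m)
    (hz : z ∈ ball n m (shift i j S)) (hiz : i ∈ z) (hjz : j ∉ z) :
    z ∈ ball n m S ∧ swapSet i j z ∈ ball n m S := by
  obtain ⟨hzJ, y, hy, hyz⟩ := exists_adjOrEq_of_mem_ball (shift_subset_johnsonVerts hi hj hS) hz
  have hszJ := swapSet_mem_johnsonVerts hi hj hzJ
  by_cases hy' : i ∉ y ∧ j ∈ y
  · obtain rfl := eq_swapSet_of_adjOrEq hiz hjz hy'.1 hy'.2 hyz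
    have hzsz := adjOrEq_swapSet_self (i := i) (j := j) z
    rcases (mem_shift_iff.1 hy).1 with hyS | hzS
    · exact ⟨mem_ball_of_adjOrEq hzJ hyS hzsz.symm, mem_ball_of_adjOrEq hszJ hyS (Or.inl rfl)⟩
    · rw [swapSet_swapSet] at hzS
      exact ⟨mem_ball_of_adjOrEq hzJ hzS (Or.inl rfl), mem_ball_of_adjOrEq hszJ hzS hzsz⟩
  · obtain ⟨hyS, hsyS⟩ := mem_and_swapSet_mem_of_mem_shift hy (by tauto)
    exact ⟨mem_ball_of_adjOrEq hzJ hyS hyz, mem_ball_of_adjOrEq hszJ hsyS hyz.swapSet⟩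

end BallShift

theorem ball_shift_subset_shift_ball_general
    (n m i j : ℕ)
    (hi : i < n) (hj : j < n)
    (S : Finset (Finset ℕ)) (hS : S ⊆ johnsonVerts n m) :
    ball n m (shift i j S) ⊆ shift i j (ball n m S) := fun _ hz =>
  mem_shift_iff.2 ⟨mem_ball_or_swapSet_mem_ball hi hj hS hz,
    mem_ball_and_swapSet_mem_ball hi hj hS hz⟩

/-- For `i ≠ j` in `[n]` and a family `S` of `m`-subsets of `[n]`,
the ball of the shift `T_{ij}(S)` is contained in the shift of the ball:
`B(T_{ij}(S)) ⊆ T_{ij}(B(S))`. -/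
theorem ball_shift_subset_shift_ball
    (n m i j : ℕ) (hm : 1 ≤ m) (hmn : m ≤ n)
    (hi : i < n) (hj : j < n) (hij : i ≠ j)
    (S : Finset (Finset ℕ)) (hS : S ⊆ johnsonVerts n m) :
    ball n m (shift i j S) ⊆ shift i j (ball n m S) :=
  ball_shift_subset_shift_ball_general n m i j hi hj S hS
end

section
/- Let n ≥ 2 and let S be a nonempty set of vertices of the Johnson graph J(n,2), i.e. a family of 2-element subsets of [n]. Let t be the cardinality of the support of S (the union of the members of S). Then |∂S| = C(n,2) − |S| − C(n−t, 2), where C(a,2) = 0 when a < 2. -/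
open Finset

/-!
Two pairs are adjacent in `J(n,2)` iff they are distinct and meet. So a pair outside `S` lies in
`∂S` iff it meets the support `T` of `S`, and since every member of `S` meets `T`, the pairs
outside `S` missing `T` are exactly the `C(n - t, 2)` pairs inside `[n] \ T`.
-/

theorem card_symmDiff_add_two_mul_card_inter {α : Type*} [DecidableEq α] (x y : Finset α) :
    #(symmDiff x y) + 2 * #(x ∩ y) = #x + #y := by
  rw [symmDiff_eq_sup_sdiff_inf, sup_eq_union, inf_eq_inter,
    card_sdiff_of_subset inter_subset_union]
  have := card_union_add_card_inter x y
  have : #(x ∩ y) ≤ #(x ∪ y) := card_le_card inter_subset_union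
  omega

theorem card_symmDiff_eq_two_iff {α : Type*} [DecidableEq α] {m : ℕ} {x y : Finset α}
    (hx : #x = m) (hy : #y = m) : #(symmDiff x y) = 2 ↔ #(x ∩ y) + 1 = m := by
  have := card_symmDiff_add_two_mul_card_inter x y
  constructor <;> intro <;> omega

theorem card_symmDiff_eq_two_iff_of_card_eq_two {α : Type*} [DecidableEq α] {x y : Finset α}
    (hx : #x = 2) (hy : #y = 2) : #(symmDiff x y) = 2 ↔ x ≠ y ∧ ¬Disjoint x y := by
  rw [card_symmDiff_eq_two_iff hx hy, disjoint_iff_inter_eq_empty, ← card_eq_zero]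
  have hle : #(x ∩ y) ≤ 2 := hx ▸ card_le_card inter_subset_left
  have hxy : #(x ∩ y) = 2 ↔ x = y := by
    refine ⟨fun h => ?_, fun h => by rw [h, inter_self, hy]⟩
    exact (eq_of_subset_of_card_le inter_subset_left (by omega)).symm.trans
      (eq_of_subset_of_card_le inter_subset_right (by omega))
  rw [ne_eq, ← hxy]
  constructor <;> intro <;> omega

theorem filter_disjoint_sup_sdiff_self {α : Type*} [DecidableEq α] (A S : Finset (Finset α))
    (hS : ∀ x ∈ S, x.Nonempty) :
    (A \ S).filter (Disjoint (S.sup id)) = A.filter (Disjoint (S.sup id)) := by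
  ext y
  simp only [mem_filter, mem_sdiff]
  refine ⟨fun h => ⟨h.1.1, h.2⟩, fun ⟨hy, hT⟩ => ⟨⟨hy, fun hyS => ?_⟩, hT⟩⟩
  have hyT : y ⊆ S.sup id := le_sup (f := id) hyS
  exact (hS y hyS).ne_empty (disjoint_self_iff_empty y |>.1 (hT.mono_left hyT))

theorem filter_disjoint_johnsonVerts (n m : ℕ) (T : Finset ℕ) :
    (johnsonVerts n m).filter (Disjoint T) = (range n \ T).powersetCard m := by
  ext y
  simp only [johnsonVerts, mem_filter, mem_powersetCard, subset_sdiff, disjoint_comm (a := T)]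
  tauto

section JohnsonTwo

variable {n : ℕ} {S : Finset (Finset ℕ)}

theorem card_eq_two_of_mem_johnsonVerts {y : Finset ℕ} (hy : y ∈ johnsonVerts n 2) : #y = 2 :=
  (mem_powersetCard.1 hy).2

theorem boundary_two_eq_filter_not_disjoint_sup (hS : S ⊆ johnsonVerts n 2) :
    boundary n 2 S = (johnsonVerts n 2 \ S).filter fun y => ¬Disjoint (S.sup id) y := by
  ext y
  simp only [boundary, mem_filter, mem_sdiff, and_assoc]
  refine and_congr_right fun hy => and_congr_right fun hyS => ?_
  simp only [Finset.disjoint_sup_left, id, not_forall, exists_prop]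
  refine exists_congr fun x => and_congr_right fun hx => ?_
  rw [card_symmDiff_eq_two_iff_of_card_eq_two (card_eq_two_of_mem_johnsonVerts (hS hx))
    (card_eq_two_of_mem_johnsonVerts hy)]
  exact and_iff_right (ne_of_mem_of_not_mem hx hyS)

theorem card_boundary_two_add_card_add_choose (hS : S ⊆ johnsonVerts n 2) :
    #(boundary n 2 S) + #S + (n - #(S.sup id)).choose 2 = n.choose 2 := by
  have hT : S.sup id ⊆ range n := Finset.sup_le fun x hx => (mem_powersetCard.1 (hS hx)).1
  have hS₀ : ∀ x ∈ S, x.Nonempty := fun x hx =>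
    card_pos.1 (by rw [card_eq_two_of_mem_johnsonVerts (hS hx)]; omega)
  have hsplit := card_filter_add_card_filter_not (Disjoint (S.sup id)) (s := johnsonVerts n 2 \ S)
  rw [← boundary_two_eq_filter_not_disjoint_sup hS, filter_disjoint_sup_sdiff_self _ _ hS₀,
    filter_disjoint_johnsonVerts, card_powersetCard, card_sdiff_of_subset hT, card_range,
    card_sdiff_of_subset hS] at hsplit
  have hJ : #(johnsonVerts n 2) = n.choose 2 := by
    rw [johnsonVerts, card_powersetCard, card_range]
  have hSJ : #S ≤ #(johnsonVerts n 2) := card_le_card hS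
  omega

end JohnsonTwo

theorem card_boundary_johnson_two_general
    (n : ℕ)
    (S : Finset (Finset ℕ)) (hS : S ⊆ johnsonVerts n 2)
    (t : ℕ) (ht : (S.sup id).card = t) :
    ((boundary n 2 S).card : ℤ) =
      (n.choose 2 : ℤ) - (S.card : ℤ) - ((n - t).choose 2 : ℤ) := by
  have h := card_boundary_two_add_card_add_choose hS
  rw [ht] at h
  omega

/-- For a nonempty family `S` of `2`-subsets of `[n]`, `n ≥ 2`,
with support of cardinality `t`, the boundary of `S` in `J(n,2)` has cardinality
`C(n,2) - |S| - C(n-t,2)`. -/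
theorem card_boundary_johnson_two
    (n : ℕ) (hn : 2 ≤ n)
    (S : Finset (Finset ℕ)) (hS : S ⊆ johnsonVerts n 2) (hne : S.Nonempty)
    (t : ℕ) (ht : (S.sup id).card = t) :
    ((boundary n 2 S).card : ℤ) =
      (n.choose 2 : ℤ) - (S.card : ℤ) - ((n - t).choose 2 : ℤ) :=
  card_boundary_johnson_two_general n S hS t ht
end

section
/- There exists a strictly increasing sequence of integers λ_0, λ_1, λ_2, … with λ_0 = −2, λ_1 = 2, and λ_{i+1} > λ_i + 1 for all i ≥ 0, such that for every integer m ≥ 1 and every integer t, C(t, m) + 3·C(t, m−1) = Σ_{i=0}^{m−1} C(t − λ_i, m−i) + 1, where C(x, j) denotes the generalized binomial coefficient C(x, j) = x(x−1)⋯(x−j+1)/j! for an integer x and a natural number j. -/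
open Finset

/-!
Pascal's rule shows that once the identity holds for `m` (and all `t`), the difference of its two
sides for `m + 1` is `1`-periodic in `t`; so it suffices to have it at `t = 0`.

For the growth, `C(-x, n) = (-1)^n C(x + n - 1, n)` turns `λ (m + 2) - 1` into an alternating sum
whose terms increase, as long as every consecutive pair `(a, b) = (λ i, λ (i + 1))` satisfies
`C(a + 2, 3) ≤ C(b + 1, 2)`: comparing ratios of consecutive terms in `j` then gives
`C(a + j, j + 1) ≤ C(b + j - 1, j)` for all `j ≥ 2`. Hence
`λ (m + 2) ≥ 1 + C(λ (m + 1) + 1, 2) - C(λ m + 2, 3)`, and from `(λ 4, λ 5) = (14, 51)` on the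
invariant `λ m ≥ 14`, `λ m ^ 2 ≤ 4 λ (m + 1)` reproduces itself and implies the seed condition.
-/

open Ring

theorem factorial_mul_choose_eq_prod (x : ℤ) (j : ℕ) :
    (j.factorial : ℤ) * choose x j = ∏ i ∈ range j, (x - i) := by
  rw [← nsmul_eq_mul, ← descPochhammer_eq_factorial_smul_choose,
    ← Polynomial.eval_eq_smeval, descPochhammer_eval_eq_prod_range]

theorem genChoose_eq_choose (x : ℤ) (j : ℕ) : genChoose x j = choose x j := by
  rw [genChoose, ← factorial_mul_choose_eq_prod, Int.mul_ediv_cancel_left _ (by positivity)]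

theorem two_mul_choose_two (x : ℤ) : 2 * choose x 2 = x * (x - 1) := by
  simpa [prod_range_succ] using factorial_mul_choose_eq_prod x 2

theorem six_mul_choose_three (x : ℤ) : 6 * choose x 3 = x * (x - 1) * (x - 2) := by
  simpa [prod_range_succ, Nat.factorial] using factorial_mul_choose_eq_prod x 3

theorem choose_nonneg_of_nonneg {x : ℤ} (hx : 0 ≤ x) (k : ℕ) : 0 ≤ choose x k := by
  lift x to ℕ using hx
  rw [choose_natCast]
  positivity

theorem choose_neg_eq (x : ℤ) (k : ℕ) : choose (-x) k = (-1) ^ k * choose (x + k - 1) k := by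
  rw [choose_neg, Units.smul_def, Int.coe_negOnePow_natCast, smul_eq_mul]

section Alternating

variable {R : Type*} [Ring R]

theorem alternating_sum_range_succ (f : ℕ → R) (n : ℕ) :
    ∑ i ∈ range (n + 2), (-1) ^ (n + 1 + i) * f i =
      f (n + 1) - ∑ i ∈ range (n + 1), (-1) ^ (n + i) * f i := by
  have hsign : ∀ i, (-1 : R) ^ (n + 1 + i) * f i = -((-1) ^ (n + i) * f i) := fun i => by
    rw [add_right_comm, pow_succ, mul_neg_one, neg_mul]
  rw [sum_range_succ, sum_congr rfl fun i _ => hsign i, sum_neg_distrib,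
    (Even.add_self (n + 1)).neg_one_pow, one_mul]
  abel

theorem alternating_sum_nonneg_and_le [PartialOrder R] [IsOrderedRing R] {f : ℕ → R} {n : ℕ}
    (h0 : 0 ≤ f 0) (hf : ∀ i < n, f i ≤ f (i + 1)) :
    0 ≤ ∑ i ∈ range (n + 1), (-1) ^ (n + i) * f i ∧
      ∑ i ∈ range (n + 1), (-1) ^ (n + i) * f i ≤ f n := by
  induction n with
  | zero => simpa using h0
  | succ n ih =>
    obtain ⟨hlo, hhi⟩ := ih fun i hi => hf i (by omega)
    rw [alternating_sum_range_succ]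
    exact ⟨sub_nonneg.2 (hhi.trans (hf n (by omega))), sub_le_self _ hlo⟩

end Alternating

theorem Nat.choose_add_succ_le_choose_add {a d : ℕ} (had : a ≤ d + 1)
    (h2 : (a + 2).choose 3 ≤ (d + 2).choose 2) {j : ℕ} (hj : 2 ≤ j) :
    (a + j).choose (j + 1) ≤ (d + j).choose j := by
  induction j, hj using Nat.le_induction with
  | base => simpa using h2
  | succ j hj ih =>
    have ea := Nat.add_one_mul_choose_eq (a + j) (j + 1)
    have ed := Nat.add_one_mul_choose_eq (d + j) j
    have cross : (a + j + 1) * (j + 1) ≤ (d + j + 1) * (j + 2) := by nlinarith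
    refine Nat.le_of_mul_le_mul_right ?_ (by positivity : 0 < (j + 1) * (j + 2))
    calc (a + (j + 1)).choose (j + 1 + 1) * ((j + 1) * (j + 2))
        = (j + 1) * ((a + j + 1).choose (j + 1 + 1) * (j + 1 + 1)) := by rw [← add_assoc]; ring
      _ = (a + j + 1) * (j + 1) * (a + j).choose (j + 1) := by rw [← ea]; ring
      _ ≤ (d + j + 1) * (j + 2) * (d + j).choose j := Nat.mul_le_mul cross ih
      _ = (j + 2) * ((d + j + 1).choose (j + 1) * (j + 1)) := by rw [← ed]; ring
      _ = (d + (j + 1)).choose (j + 1) * ((j + 1) * (j + 2)) := by rw [← add_assoc]; ring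

/-- The case `j = 2` of `IsSeed.choose_le`, from which all the others follow. -/
def IsSeed (a b : ℤ) : Prop :=
  1 ≤ a ∧ a + 2 ≤ b ∧ choose (a + 2) 3 ≤ choose (b + 1) 2

theorem IsSeed.choose_le {a b : ℤ} (h : IsSeed a b) {j : ℕ} (hj : 2 ≤ j) :
    choose (a + j) (j + 1) ≤ choose (b + j - 1) j := by
  obtain ⟨ha, hab, hseed⟩ := h
  lift a to ℕ using by omega
  obtain ⟨d, rfl⟩ : ∃ d : ℕ, b = d + 1 := ⟨(b - 1).toNat, by omega⟩
  rw [show (d : ℤ) + 1 + j - 1 = ((d + j : ℕ) : ℤ) by push_cast; ring, ← Nat.cast_add,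
    choose_natCast, choose_natCast]
  rw [show (a : ℤ) + 2 = ((a + 2 : ℕ) : ℤ) by push_cast; ring,
    show (d : ℤ) + 1 + 1 = ((d + 2 : ℕ) : ℤ) by push_cast; ring, choose_natCast,
    choose_natCast] at hseed
  exact_mod_cast Nat.choose_add_succ_le_choose_add (by omega) (by exact_mod_cast hseed) hj

def GrowsSquare (a b : ℤ) : Prop :=
  14 ≤ a ∧ a ^ 2 ≤ 4 * b

namespace GrowsSquare

variable {a b c : ℤ}

theorem cube_le (h : GrowsSquare a b) : 7 * ((a + 2) * (a + 1) * a) ≤ 10 * b ^ 2 := by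
  obtain ⟨ha, hab⟩ := h
  have h7 : 7 * a ≤ 2 * b := by nlinarith
  have hquad : 98 * ((a + 2) * (a + 1)) ≤ 120 * a ^ 2 := by nlinarith
  have hcube : 7 * a ^ 3 ≤ 8 * b ^ 2 := by nlinarith
  nlinarith

theorem isSeed (h : GrowsSquare a b) : IsSeed a b := by
  have hcube := h.cube_le
  have h2 := two_mul_choose_two (b + 1)
  have h3 := six_mul_choose_three (a + 2)
  obtain ⟨ha, hab⟩ := h
  exact ⟨by omega, by nlinarith, by nlinarith⟩

theorem next (h : GrowsSquare a b) (hc : 1 + choose (b + 1) 2 - choose (a + 2) 3 ≤ c) :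
    GrowsSquare b c := by
  have hcube := h.cube_le
  have h2 := two_mul_choose_two (b + 1)
  have h3 := six_mul_choose_three (a + 2)
  obtain ⟨ha, hab⟩ := h
  exact ⟨by nlinarith, by nlinarith⟩

end GrowsSquare

/-- `lambdaSeq n` is what the identity for `m = n + 1` at `t = 0` forces. -/
def lambdaSeq : ℕ → ℤ
  | 0 => -2
  | n + 1 => 1 + ∑ i : Fin (n + 1), choose (-lambdaSeq i) (n + 2 - i)

namespace lambdaSeq

@[simp] theorem zero : lambdaSeq 0 = -2 := by rw [lambdaSeq]

theorem succ (n : ℕ) :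
    lambdaSeq (n + 1) = 1 + ∑ i ∈ range (n + 1), choose (-lambdaSeq i) (n + 2 - i) := by
  rw [lambdaSeq, Fin.sum_univ_eq_sum_range fun i => choose (-lambdaSeq i) (n + 2 - i)]

@[simp] theorem one : lambdaSeq 1 = 2 := by
  simp only [succ, sum_range_succ, sum_range_zero, zero, ← genChoose_eq_choose]; decide

@[simp] theorem two : lambdaSeq 2 = 4 := by
  simp only [succ, sum_range_succ, sum_range_zero, zero, ← genChoose_eq_choose]; decide

@[simp] theorem three : lambdaSeq 3 = 7 := by
  simp only [succ, sum_range_succ, sum_range_zero, zero, ← genChoose_eq_choose]; decide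

@[simp] theorem four : lambdaSeq 4 = 14 := by
  simp only [succ, sum_range_succ, sum_range_zero, zero, ← genChoose_eq_choose]; decide

@[simp] theorem five : lambdaSeq 5 = 51 := by
  simp only [succ, sum_range_succ, sum_range_zero, zero, ← genChoose_eq_choose]; decide

theorem choose_add_three_mul_choose (m : ℕ) (t : ℤ) :
    choose t (m + 1) + 3 * choose t m =
      ∑ i ∈ range (m + 1), choose (t - lambdaSeq i) (m + 1 - i) + 1 := by
  induction m generalizing t with
  | zero =>
    simp only [choose_one_right, choose_zero_right, sum_range_one, zero, Nat.sub_zero, zero_add]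
    ring
  | succ m ih =>
    set F : ℤ → ℤ := fun t => choose t (m + 2) + 3 * choose t (m + 1) -
      (∑ i ∈ range (m + 2), choose (t - lambdaSeq i) (m + 2 - i) + 1) with hF
    have hper : Function.Periodic F 1 := by
      intro t
      have hL : choose (t + 1) (m + 2) + 3 * choose (t + 1) (m + 1) =
          choose t (m + 2) + 3 * choose t (m + 1) + (choose t (m + 1) + 3 * choose t m) := by
        rw [choose_succ_succ t (m + 1), choose_succ_succ t m]
        ring
      have hR : ∑ i ∈ range (m + 2), choose (t + 1 - lambdaSeq i) (m + 2 - i) =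
          ∑ i ∈ range (m + 2), choose (t - lambdaSeq i) (m + 2 - i) +
            (∑ i ∈ range (m + 1), choose (t - lambdaSeq i) (m + 1 - i) + 1) := by
        have hpascal : ∀ i ∈ range (m + 1), choose (t + 1 - lambdaSeq i) (m + 2 - i) =
            choose (t - lambdaSeq i) (m + 2 - i) + choose (t - lambdaSeq i) (m + 1 - i) := by
          intro i hi
          rw [show m + 2 - i = m + 1 - i + 1 by have := mem_range.mp hi; omega,
            show t + 1 - lambdaSeq i = t - lambdaSeq i + 1 by ring, choose_succ_succ]
          ring
        rw [sum_range_succ, sum_range_succ _ (m + 1), sum_congr rfl hpascal, sum_add_distrib,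
          show m + 2 - (m + 1) = 1 by omega, choose_one_right, choose_one_right]
        ring
      simp only [hF, hL, hR, ih t]
      ring
    have h0 : F 0 = 0 := by
      simp only [hF, choose_zero_succ, sum_range_succ _ (m + 1), succ m, zero_sub,
        show m + 2 - (m + 1) = 1 by omega, choose_one_right]
      ring
    have := hper.int_mul_eq t
    rw [Int.cast_id, mul_one, h0] at this
    exact sub_eq_zero.mp this

theorem succ_sub_one (n : ℕ) : lambdaSeq (n + 1) - 1 =
    ∑ i ∈ range (n + 1), (-1) ^ (n + i) * choose (lambdaSeq i + (n + 1 - i : ℕ)) (n + 2 - i) := by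
  rw [succ, add_sub_cancel_left]
  refine sum_congr rfl fun i hi => ?_
  obtain ⟨d, rfl⟩ := Nat.exists_eq_add_of_le (Nat.lt_succ_iff.mp (mem_range.mp hi))
  rw [choose_neg_eq, show i + d + 2 - i = d + 2 by omega, show i + d + 1 - i = d + 1 by omega,
    show i + d + i = d + 2 * i by ring]
  simp only [pow_add, pow_mul, neg_one_sq, one_pow, mul_one]
  congr 2
  push_cast
  ring

theorem le_succ_succ (m : ℕ)
    (hseed : ∀ i, 1 ≤ i → i < m → IsSeed (lambdaSeq i) (lambdaSeq (i + 1))) :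
    1 + choose (lambdaSeq (m + 1) + 1) 2 - choose (lambdaSeq m + 2) 3 ≤ lambdaSeq (m + 2) := by
  set f : ℕ → ℤ := fun i => choose (lambdaSeq i + (m + 2 - i : ℕ)) (m + 3 - i) with hf
  have hsum : lambdaSeq (m + 2) - 1 = f (m + 1) - ∑ i ∈ range (m + 1), (-1) ^ (m + i) * f i := by
    rw [succ_sub_one, ← alternating_sum_range_succ]
  have hf0 : f 0 = 0 := by
    simp only [hf, zero, Nat.sub_zero, show (-2 : ℤ) + (m + 2 : ℕ) = (m : ℕ) by push_cast; ring,
      choose_natCast, Nat.choose_eq_zero_of_lt (by omega : m < m + 3), Nat.cast_zero]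
  have hmono : ∀ i < m, f i ≤ f (i + 1) := by
    intro i hi
    obtain rfl | hi0 := Nat.eq_zero_or_pos i
    · rw [hf0]
      exact choose_nonneg_of_nonneg (by rw [zero_add, one]; positivity) _
    · obtain ⟨j, hj⟩ : ∃ j, m + 2 - i = j := ⟨_, rfl⟩
      have := (hseed i hi0 hi).choose_le (j := j) (by omega)
      simp only [hf]
      rw [show m + 3 - i = j + 1 by omega, show m + 3 - (i + 1) = j by omega, hj,
        show m + 2 - (i + 1) = j - 1 by omega]
      convert this using 2
      push_cast [show 1 ≤ j by omega]
      ring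
  have hbound := (alternating_sum_nonneg_and_le hf0.ge hmono).2
  have hlast : f (m + 1) = choose (lambdaSeq (m + 1) + 1) 2 := by
    simp [hf, show m + 3 - (m + 1) = 2 by omega]
  have hprev : f m = choose (lambdaSeq m + 2) 3 := by
    simp [hf, show m + 3 - m = 3 by omega]
  linarith

theorem isSeed_and_growsSquare (m : ℕ) (hm : 4 ≤ m) :
    (∀ i, 1 ≤ i → i < m → IsSeed (lambdaSeq i) (lambdaSeq (i + 1))) ∧
      GrowsSquare (lambdaSeq m) (lambdaSeq (m + 1)) := by
  induction m, hm using Nat.le_induction with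
  | base =>
    refine ⟨fun i hi1 hi4 => ?_, by simp [GrowsSquare]⟩
    interval_cases i <;>
      simp only [IsSeed, Nat.reduceAdd, one, two, three, four, ← genChoose_eq_choose] <;> decide
  | succ m hm ih =>
    obtain ⟨hseed, hgrow⟩ := ih
    have hseed' : ∀ i, 1 ≤ i → i < m + 1 → IsSeed (lambdaSeq i) (lambdaSeq (i + 1)) := by
      intro i hi1 hi
      obtain hi | rfl := Nat.lt_succ_iff_lt_or_eq.mp hi
      · exact hseed i hi1 hi
      · exact hgrow.isSeed
    exact ⟨hseed', hgrow.next (le_succ_succ m hseed)⟩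

theorem isSeed (i : ℕ) (hi : 1 ≤ i) : IsSeed (lambdaSeq i) (lambdaSeq (i + 1)) :=
  (isSeed_and_growsSquare (i + 4) (by omega)).1 i hi (by omega)

theorem add_one_lt_succ (i : ℕ) : lambdaSeq i + 1 < lambdaSeq (i + 1) := by
  obtain rfl | hi := Nat.eq_zero_or_pos i
  · simp
  · linarith [(isSeed i hi).2.1]

end lambdaSeq

/-- There is a strictly increasing integer sequence `λ` with
`λ 0 = -2`, `λ 1 = 2` and `λ (i+1) > λ i + 1` for all `i`, such that for every
`m ≥ 1` and every integer `t`,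
`C(t,m) + 3·C(t,m-1) = ∑_{i=0}^{m-1} C(t - λ i, m - i) + 1`
(generalized binomial coefficients). -/
theorem exists_lambda_sequence :
    ∃ lam : ℕ → ℤ, StrictMono lam ∧ lam 0 = -2 ∧ lam 1 = 2 ∧
      (∀ i : ℕ, lam i + 1 < lam (i + 1)) ∧
      ∀ m : ℕ, 1 ≤ m → ∀ t : ℤ,
        genChoose t m + 3 * genChoose t (m - 1) =
          (∑ i ∈ Finset.range m, genChoose (t - lam i) (m - i)) + 1 := by
  refine ⟨lambdaSeq, strictMono_nat_of_lt_succ fun i => by linarith [lambdaSeq.add_one_lt_succ i],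
    lambdaSeq.zero, lambdaSeq.one, lambdaSeq.add_one_lt_succ, fun m hm t => ?_⟩
  obtain ⟨m, rfl⟩ := Nat.exists_eq_add_of_le' hm
  simpa only [genChoose_eq_choose, Nat.add_sub_cancel] using
    lambdaSeq.choose_add_three_mul_choose m t
end
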